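/- Let A be a finite arrangement of affine hyperplanes in ℝ^ℓ and let F^{ℓ−1} be a generic affine hyperplane for A (in particular F^{ℓ−1} ∉ A). Then the Poincaré polynomial of the enlarged arrangement satisfies π(A ∪ {F^{ℓ−1}}, t) = (1+t)·π(A,t) − b_ℓ(A)·t^{ℓ+1}, where b_ℓ(A) is the coefficient of t^ℓ in π(A,t). -/

import Mathlib

open scoped Classical

noncomputable section

variable (K : Type) [Field K] {V : Type} [AddCommGroup V] [Module K V]

/-- An affine hyperplane in `V`: the level set of a nonzero linear functional. -/
def IsHyperplane (H : Set V) : Prop :=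
  ∃ (f : V →ₗ[K] K) (c : K), f ≠ 0 ∧ H = {x | f x = c}

/-- The dimension of a subset of `V`: the dimension of its affine span. -/
def flatDim (X : Set V) : ℕ := Module.finrank K (affineSpan K X).direction

/-- The intersection poset `L(A)` of the arrangement `A` inside the ambient set `W`:
all nonempty intersections of subfamilies of `A` (intersected with the ambient `W`),
the empty subfamily giving `W` itself. -/
def interPosetIn (W : Set V) (A : Finset (Set V)) : Finset (Set V) :=
  (A.powerset.image fun S => W ∩ ⋂ H ∈ S, H).filter fun X => X.Nonempty

/-- The rank of `X`: its codimension within the ambient space `W`. -/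
def rkIn (W X : Set V) : ℕ := flatDim K W - flatDim K X

/-- `μ` satisfies the defining recursion of the Möbius function of the poset
`L(A)` inside the ambient set `W`.  `L(A)` is ordered by reverse inclusion, so the
condition `μ(W) = 1`, `μ(X) = -∑_{Y < X} μ(Y)` for `X > W` is equivalent to:
for every `X ∈ L(A)`, `∑_{Y ⊇ X} μ(Y)` is `1` if `X = W` and `0` otherwise. -/
def IsMobiusIn (W : Set V) (A : Finset (Set V)) (μ : Set V → ℤ) : Prop :=
  ∀ X ∈ interPosetIn W A,
    (∑ Y ∈ (interPosetIn W A).filter fun Y => X ⊆ Y, μ Y) = if X = W then 1 else 0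

/-- The Poincaré polynomial `π(A,t) = ∑_{X ∈ L(A)} μ(X) (-t)^{r(X)}`. -/
def poinIn (W : Set V) (A : Finset (Set V)) (μ : Set V → ℤ) : Polynomial ℤ :=
  ∑ X ∈ interPosetIn W A, Polynomial.C (μ X) * (- Polynomial.X) ^ (rkIn K W X)

/-- A chamber of the arrangement `A` within the ambient set `W`: a connected
component of `W ∖ ⋃_{H ∈ A} H`. -/
def IsChamberIn [TopologicalSpace V] (W : Set V) (A : Finset (Set V)) (C : Set V) : Prop :=
  ∃ x ∈ W ∩ (⋃ H ∈ A, (H : Set V))ᶜ, C = connectedComponentIn (W ∩ (⋃ H ∈ A, (H : Set V))ᶜ) x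

/-- `F` is a generic (transversal) `q`-dimensional affine subspace for the
arrangement `A`: it is (the carrier of) an affine subspace of dimension `q`, and
for every `X ∈ L(A)`, if `r(X) ≤ q` then `F ∩ X` is nonempty of dimension
`q - r(X)`, and if `r(X) > q` then `F ∩ X = ∅`. -/
def IsGenericFlat (q : ℕ) (A : Finset (Set V)) (F : Set V) : Prop :=
  (∃ W : AffineSubspace K V, (W : Set V) = F) ∧ F.Nonempty ∧ flatDim K F = q ∧
  ∀ X ∈ interPosetIn Set.univ A,
    (rkIn K Set.univ X ≤ q → (F ∩ X).Nonempty ∧ flatDim K (F ∩ X) = q - rkIn K Set.univ X) ∧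
    (q < rkIn K Set.univ X → F ∩ X = ∅)

end

/-!
No flat of `L(A)` lies in the generic hyperplane `F`, so the flats that `F` adds to `L(A)` are
the traces `F ∩ X` of the flats `X ∈ L(A)` meeting `F` (those of rank `< ℓ`), and `X ↦ F ∩ X`
is an order embedding raising the rank by one. Hence the Möbius function is unchanged on `L(A)`,
and comparing the Möbius recursions at `F ∩ X` and at `X` gives `μ'(F ∩ X) = -μ(X)`. Summing,
`π(A ∪ {F}, t) = π(A, t) + t · (π(A, t) - b_ℓ t^ℓ)`, the bracket being the contribution of the
flats of rank `< ℓ`.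
-/

section InterPoset

noncomputable def meetingFlatsIn {V : Type} (W : Set V) (A : Finset (Set V)) (F : Set V) :
    Finset (Set V) :=
  (interPosetIn W A).filter fun X => (F ∩ X).Nonempty

variable {V : Type} {W F X Y : Set V} {A : Finset (Set V)}

theorem mem_meetingFlatsIn :
    X ∈ meetingFlatsIn W A F ↔ X ∈ interPosetIn W A ∧ (F ∩ X).Nonempty :=
  Finset.mem_filter

theorem mem_interPosetIn :
    X ∈ interPosetIn W A ↔ (∃ S ⊆ A, W ∩ ⋂ H ∈ S, H = X) ∧ X.Nonempty := by
  simp [interPosetIn]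

theorem univ_mem_interPosetIn [Nonempty V] : (Set.univ : Set V) ∈ interPosetIn Set.univ A :=
  mem_interPosetIn.2 ⟨⟨∅, Finset.empty_subset _, by simp⟩, Set.univ_nonempty⟩

theorem interPosetIn_eq_singleton_univ [Nonempty V] [Subsingleton V] :
    interPosetIn Set.univ A = {Set.univ} :=
  Finset.eq_singleton_iff_unique_mem.2 ⟨univ_mem_interPosetIn,
    fun _ hX => Subsingleton.eq_univ_of_nonempty (mem_interPosetIn.1 hX).2⟩

theorem inter_mem_interPosetIn (hX : X ∈ interPosetIn W A) (hY : Y ∈ interPosetIn W A)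
    (hXY : (X ∩ Y).Nonempty) : X ∩ Y ∈ interPosetIn W A := by
  obtain ⟨⟨S, hSA, rfl⟩, -⟩ := mem_interPosetIn.1 hX
  obtain ⟨⟨T, hTA, rfl⟩, -⟩ := mem_interPosetIn.1 hY
  refine mem_interPosetIn.2 ⟨⟨S ∪ T, Finset.union_subset hSA hTA, ?_⟩, hXY⟩
  ext
  simp only [Set.mem_inter_iff, Set.mem_iInter, Finset.mem_union, or_imp, forall_and]
  tauto

theorem interPosetIn_insert :
    interPosetIn W (insert F A) = interPosetIn W A ∪ (meetingFlatsIn W A F).image (F ∩ ·) := by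
  ext Z
  simp only [meetingFlatsIn, interPosetIn, Finset.powerset_insert, Finset.image_union,
    Finset.image_image, Finset.filter_union, Finset.mem_union, Finset.mem_filter, Finset.mem_image,
    Finset.mem_powerset, Function.comp_def, Finset.set_biInter_insert]
  refine or_congr_right ⟨?_, ?_⟩
  · rintro ⟨⟨S, hS, rfl⟩, hne⟩
    rw [Set.inter_left_comm] at hne ⊢
    exact ⟨_, ⟨⟨⟨S, hS, rfl⟩, hne.mono Set.inter_subset_right⟩, hne⟩, rfl⟩
  · rintro ⟨_, ⟨⟨⟨S, hS, rfl⟩, -⟩, hne⟩, rfl⟩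
    exact ⟨⟨S, hS, Set.inter_left_comm _ _ _⟩, hne⟩

end InterPoset

section Mobius

variable {α M : Type*} [PartialOrder α] [AddCancelCommMonoid M]

theorem eqOn_of_sum_filter_le_eq {P : Finset α} {f g : α → M}
    (h : ∀ X ∈ P, ∑ Y ∈ P.filter (X ≤ ·), f Y = ∑ Y ∈ P.filter (X ≤ ·), g Y) :
    ∀ X ∈ P, f X = g X := by
  intro X₀ hX₀
  refine (P.finite_toSet.wellFoundedOn (r := (· > ·))).induction hX₀ (P := fun X => f X = g X)
    fun X hX ih => ?_
  have hsplit : P.filter (X ≤ ·) = insert X (P.filter (X < ·)) := by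
    ext Y
    simp only [Finset.mem_filter, Finset.mem_insert, le_iff_eq_or_lt]
    grind
  have hlt : ∑ Y ∈ P.filter (X < ·), f Y = ∑ Y ∈ P.filter (X < ·), g Y :=
    Finset.sum_congr rfl fun Y hY => ih Y (Finset.mem_filter.1 hY).1 (Finset.mem_filter.1 hY).2
  have hX' := h X hX
  rw [hsplit, Finset.sum_insert (by simp), Finset.sum_insert (by simp), hlt] at hX'
  exact add_right_cancel hX'

theorem IsMobiusIn.eqOn {V : Type} {W : Set V} {A : Finset (Set V)} {μ ν : Set V → ℤ}
    (hμ : IsMobiusIn W A μ) (hν : IsMobiusIn W A ν) : ∀ X ∈ interPosetIn W A, μ X = ν X :=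
  eqOn_of_sum_filter_le_eq fun X hX => (hμ X hX).trans (hν X hX).symm

end Mobius

section Flats

variable {K V : Type} [Field K] [AddCommGroup V] [Module K V]

theorem IsHyperplane.exists_coe_eq {H : Set V} (hH : IsHyperplane K H) :
    ∃ S : AffineSubspace K V, (S : Set V) = H := by
  obtain ⟨f, c, -, rfl⟩ := hH
  exact ⟨(affineSpan K {c}).comap f.toAffineMap, by ext; simp⟩

theorem exists_coe_eq_of_mem_interPosetIn {A : Finset (Set V)} (hA : ∀ H ∈ A, IsHyperplane K H)
    {X : Set V} (hX : X ∈ interPosetIn Set.univ A) :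
    ∃ S : AffineSubspace K V, (S : Set V) = X := by
  obtain ⟨⟨T, hTA, rfl⟩, -⟩ := mem_interPosetIn.1 hX
  choose S hS using fun H (hH : H ∈ T) => (hA H (hTA hH)).exists_coe_eq
  exact ⟨⨅ (H) (hH : H ∈ T), S H hH, by simp [AffineSubspace.coe_iInf, hS]⟩

theorem flatDim_coe (S : AffineSubspace K V) :
    flatDim K (S : Set V) = Module.finrank K S.direction := by
  rw [flatDim, AffineSubspace.affineSpan_coe]

theorem flatDim_univ : flatDim K (Set.univ : Set V) = Module.finrank K V := by
  rw [flatDim, AffineSubspace.span_univ, AffineSubspace.direction_top, finrank_top]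

theorem rkIn_univ (X : Set V) : rkIn K Set.univ X = Module.finrank K V - flatDim K X := by
  rw [rkIn, flatDim_univ]

variable [FiniteDimensional K V]

theorem flatDim_le_finrank (X : Set V) : flatDim K X ≤ Module.finrank K V :=
  Submodule.finrank_le _

theorem flatDim_mono {X Y : Set V} (h : X ⊆ Y) : flatDim K X ≤ flatDim K Y :=
  Submodule.finrank_mono (AffineSubspace.direction_le (affineSpan_mono K h))

theorem AffineSubspace.eq_of_le_of_flatDim_le {S T : AffineSubspace K V}
    (hS : (S : Set V).Nonempty) (hST : S ≤ T)
    (hd : flatDim K (T : Set V) ≤ flatDim K (S : Set V)) :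
    S = T := by
  rw [flatDim_coe, flatDim_coe] at hd
  obtain ⟨x, hx⟩ := hS
  exact AffineSubspace.ext_of_direction_eq
    (Submodule.eq_of_le_of_finrank_le (AffineSubspace.direction_le hST) hd) ⟨x, hx, hST hx⟩

end Flats

section Generic

variable {K V : Type} [Field K] [AddCommGroup V] [Module K V]
  {A : Finset (Set V)} {F X Y : Set V} {q : ℕ}

theorem IsGenericFlat.inter_nonempty_iff (hF : IsGenericFlat K q A F)
    (hX : X ∈ interPosetIn Set.univ A) : (F ∩ X).Nonempty ↔ rkIn K Set.univ X ≤ q := by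
  refine ⟨fun hne => ?_, fun h => ((hF.2.2.2 X hX).1 h).1⟩
  by_contra! h
  simp [(hF.2.2.2 X hX).2 h] at hne

theorem IsGenericFlat.flatDim_inter (hF : IsGenericFlat K q A F)
    (hX : X ∈ interPosetIn Set.univ A) (hne : (F ∩ X).Nonempty) :
    flatDim K (F ∩ X) = q - rkIn K Set.univ X :=
  ((hF.2.2.2 X hX).1 ((hF.inter_nonempty_iff hX).1 hne)).2

theorem IsGenericFlat.rkIn_inter (hF : IsGenericFlat K q A F) (hq : q ≤ Module.finrank K V)
    (hX : X ∈ interPosetIn Set.univ A) (hne : (F ∩ X).Nonempty) :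
    rkIn K Set.univ (F ∩ X) = rkIn K Set.univ X + (Module.finrank K V - q) := by
  have hrk := (hF.inter_nonempty_iff hX).1 hne
  rw [rkIn_univ, hF.flatDim_inter hX hne]
  omega

variable [FiniteDimensional K V]

theorem rkIn_univ_le_of_subset (h : X ⊆ Y) : rkIn K Set.univ Y ≤ rkIn K Set.univ X := by
  rw [rkIn_univ, rkIn_univ]
  exact Nat.sub_le_sub_left (flatDim_mono h) _

namespace IsGenericFlat

theorem inter_nonempty_of_subset (hF : IsGenericFlat K q A F)
    (hX : X ∈ interPosetIn Set.univ A) (hY : Y ∈ interPosetIn Set.univ A)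
    (hne : (F ∩ X).Nonempty) (hXY : X ⊆ Y) : (F ∩ Y).Nonempty :=
  (hF.inter_nonempty_iff hY).2 <|
    (rkIn_univ_le_of_subset hXY).trans ((hF.inter_nonempty_iff hX).1 hne)

theorem not_subset_of_mem (hF : IsGenericFlat K q A F) (hq : q < Module.finrank K V)
    {Z : Set V} (hZ : Z ∈ interPosetIn Set.univ A) : ¬Z ⊆ F := by
  intro hZF
  have hFZ : F ∩ Z = Z := Set.inter_eq_right.2 hZF
  have hne : (F ∩ Z).Nonempty := by rw [hFZ]; exact (mem_interPosetIn.1 hZ).2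
  have hdim := hF.flatDim_inter hZ hne
  have hrk := (hF.inter_nonempty_iff hZ).1 hne
  rw [hFZ, rkIn_univ] at hdim
  rw [rkIn_univ] at hrk
  have := flatDim_le_finrank (K := K) Z
  omega

theorem subset_of_inter_subset (hA : ∀ H ∈ A, IsHyperplane K H) (hF : IsGenericFlat K q A F)
    (hX : X ∈ interPosetIn Set.univ A) (hY : Y ∈ interPosetIn Set.univ A)
    (hne : (F ∩ X).Nonempty) (hsub : F ∩ X ⊆ Y) : X ⊆ Y := by
  have hFXY : F ∩ (X ∩ Y) = F ∩ X :=
    (Set.inter_subset_inter_right F Set.inter_subset_left).antisymm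
      fun z hz => ⟨hz.1, hz.2, hsub hz⟩
  have hne' : (F ∩ (X ∩ Y)).Nonempty := by rwa [hFXY]
  have hXY := inter_mem_interPosetIn hX hY (hne.mono fun z hz => ⟨hz.2, hsub hz⟩)
  have hdim := hF.flatDim_inter hXY hne'
  rw [hFXY, hF.flatDim_inter hX hne] at hdim
  have hrkXY := (hF.inter_nonempty_iff hXY).1 hne'
  have hrkX := (hF.inter_nonempty_iff hX).1 hne
  simp only [rkIn_univ] at hdim hrkXY hrkX
  obtain ⟨S, hS⟩ := exists_coe_eq_of_mem_interPosetIn hA hX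
  obtain ⟨T, hT⟩ := exists_coe_eq_of_mem_interPosetIn hA hXY
  have hTS : T = S := by
    refine AffineSubspace.eq_of_le_of_flatDim_le ?_ ?_ ?_
    · exact hT ▸ hne'.mono Set.inter_subset_right
    · exact (AffineSubspace.le_def _ _).2 (hT ▸ hS ▸ Set.inter_subset_left)
    · have := flatDim_le_finrank (K := K) X
      have := flatDim_le_finrank (K := K) (X ∩ Y)
      rw [hS, hT]
      omega
  rw [← Set.inter_eq_left, ← hT, hTS, hS]

end IsGenericFlat

end Generic

theorem Polynomial.C_mul_neg_X_pow {R : Type*} [CommRing R] (a : R) (r : ℕ) :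
    C a * (-X) ^ r = C ((-1) ^ r * a) * X ^ r := by
  rw [neg_pow, mul_left_comm, ← C_1, ← C_neg, ← C_pow, ← mul_assoc, ← C_mul]

section MobiusOfGeneric

variable {K V : Type} [Field K] [AddCommGroup V] [Module K V]
  {A : Finset (Set V)} {F X : Set V} {μ μ' : Set V → ℤ}

theorem poinIn_eq_one_of_subsingleton [Subsingleton V] (hμ : IsMobiusIn Set.univ A μ) :
    poinIn K Set.univ A μ = 1 := by
  have h := hμ Set.univ univ_mem_interPosetIn
  simp only [interPosetIn_eq_singleton_univ, Finset.filter_singleton, subset_refl, if_true,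
    Finset.sum_singleton] at h
  rw [poinIn, interPosetIn_eq_singleton_univ, Finset.sum_singleton, h, rkIn, Nat.sub_self,
    pow_zero, map_one, mul_one]

variable [FiniteDimensional K V] {q : ℕ}

namespace IsGenericFlat

theorem disjoint_image_inter (hF : IsGenericFlat K q A F) (hq : q < Module.finrank K V) :
    Disjoint (interPosetIn Set.univ A) ((meetingFlatsIn Set.univ A F).image (F ∩ ·)) := by
  refine Finset.disjoint_right.2 fun Z hZ hZA => ?_
  obtain ⟨Y, -, rfl⟩ := Finset.mem_image.1 hZ
  exact hF.not_subset_of_mem hq hZA Set.inter_subset_left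

theorem injOn_inter (hA : ∀ H ∈ A, IsHyperplane K H) (hF : IsGenericFlat K q A F) :
    Set.InjOn (F ∩ ·) (meetingFlatsIn Set.univ A F) := by
  intro X hX Y hY hXY
  replace hXY : F ∩ X = F ∩ Y := hXY
  obtain ⟨hXA, hXne⟩ := mem_meetingFlatsIn.1 hX
  obtain ⟨hYA, hYne⟩ := mem_meetingFlatsIn.1 hY
  exact (hF.subset_of_inter_subset hA hXA hYA hXne (hXY ▸ Set.inter_subset_right)).antisymm
    (hF.subset_of_inter_subset hA hYA hXA hYne (hXY ▸ Set.inter_subset_right))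

theorem filter_subset_interPosetIn_insert (hF : IsGenericFlat K q A F)
    (hq : q < Module.finrank K V) (hX : X ∈ interPosetIn Set.univ A) :
    (interPosetIn Set.univ (insert F A)).filter (X ⊆ ·) =
      (interPosetIn Set.univ A).filter (X ⊆ ·) := by
  rw [interPosetIn_insert, Finset.filter_union, Finset.union_eq_left]
  intro Z hZ
  obtain ⟨hZ, hXZ⟩ := Finset.mem_filter.1 hZ
  obtain ⟨Y, -, rfl⟩ := Finset.mem_image.1 hZ
  exact absurd (hXZ.trans Set.inter_subset_left) (hF.not_subset_of_mem hq hX)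

theorem mobius_insert_eq (hF : IsGenericFlat K q A F) (hq : q < Module.finrank K V)
    (hμ : IsMobiusIn Set.univ A μ) (hμ' : IsMobiusIn Set.univ (insert F A) μ') :
    ∀ X ∈ interPosetIn Set.univ A, μ' X = μ X := by
  refine IsMobiusIn.eqOn (fun X hX => ?_) hμ
  rw [← hF.filter_subset_interPosetIn_insert hq hX]
  exact hμ' X (interPosetIn_insert ▸ Finset.mem_union_left _ hX)

theorem filter_inter_subset_interPosetIn_insert (hA : ∀ H ∈ A, IsHyperplane K H)
    (hF : IsGenericFlat K q A F) (hX : X ∈ meetingFlatsIn Set.univ A F) :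
    (interPosetIn Set.univ (insert F A)).filter (F ∩ X ⊆ ·) =
      (interPosetIn Set.univ A).filter (X ⊆ ·) ∪
        ((meetingFlatsIn Set.univ A F).filter (X ⊆ ·)).image (F ∩ ·) := by
  obtain ⟨hXA, hne⟩ := mem_meetingFlatsIn.1 hX
  rw [interPosetIn_insert, Finset.filter_union, Finset.filter_image]
  congr 1
  · refine Finset.filter_congr fun Z hZ => ⟨hF.subset_of_inter_subset hA hXA hZ hne, ?_⟩
    exact Set.Subset.trans Set.inter_subset_right
  · refine congrArg _ <| Finset.filter_congr fun Y hY =>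
      ⟨fun h => ?_, Set.inter_subset_inter_right F⟩
    exact hF.subset_of_inter_subset hA hXA (mem_meetingFlatsIn.1 hY).1 hne
      (h.trans Set.inter_subset_right)

theorem filter_subset_meetingFlatsIn (hF : IsGenericFlat K q A F)
    (hX : X ∈ meetingFlatsIn Set.univ A F) :
    (meetingFlatsIn Set.univ A F).filter (X ⊆ ·) =
      (interPosetIn Set.univ A).filter (X ⊆ ·) := by
  obtain ⟨hXA, hne⟩ := mem_meetingFlatsIn.1 hX
  rw [meetingFlatsIn, Finset.filter_filter]
  exact Finset.filter_congr fun Y hY =>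
    ⟨And.right, fun hXY => ⟨hF.inter_nonempty_of_subset hXA hY hne hXY, hXY⟩⟩

theorem mobius_inter_eq_neg (hA : ∀ H ∈ A, IsHyperplane K H) (hF : IsGenericFlat K q A F)
    (hq : q < Module.finrank K V)
    (hμ : IsMobiusIn Set.univ A μ) (hμ' : IsMobiusIn Set.univ (insert F A) μ') :
    ∀ X ∈ meetingFlatsIn Set.univ A F, μ' (F ∩ X) = -μ X := by
  refine eqOn_of_sum_filter_le_eq fun X hX => ?_
  obtain ⟨hXA, hne⟩ := mem_meetingFlatsIn.1 hX
  have hFX : F ∩ X ∈ interPosetIn Set.univ (insert F A) :=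
    interPosetIn_insert ▸ Finset.mem_union_right _ (Finset.mem_image_of_mem _ hX)
  have hFX_ne_univ : F ∩ X ≠ Set.univ := fun h =>
    hF.not_subset_of_mem hq univ_mem_interPosetIn (h ▸ Set.inter_subset_left)
  have hrec := hμ' (F ∩ X) hFX
  rw [if_neg hFX_ne_univ, hF.filter_inter_subset_interPosetIn_insert hA hX,
    Finset.sum_union ((hF.disjoint_image_inter hq).mono (Finset.filter_subset _ _)
      (Finset.image_subset_image (Finset.filter_subset _ _))),
    Finset.sum_image ((hF.injOn_inter hA).mono (Finset.coe_subset.2 (Finset.filter_subset _ _))),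
    Finset.sum_congr rfl fun Y hY => hF.mobius_insert_eq hq hμ hμ' Y (Finset.mem_filter.1 hY).1,
    hμ X hXA] at hrec
  have hμX : ∑ Y ∈ (meetingFlatsIn Set.univ A F).filter (X ⊆ ·), μ Y =
      if X = Set.univ then 1 else 0 := by
    rw [hF.filter_subset_meetingFlatsIn hX, hμ X hXA]
  rw [Finset.sum_neg_distrib, hμX]
  linarith

end IsGenericFlat

end MobiusOfGeneric

section PoincareOfGeneric

variable {K V : Type} [Field K] [AddCommGroup V] [Module K V]
  {A : Finset (Set V)} {F : Set V} {q : ℕ} {μ μ' : Set V → ℤ}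

namespace IsGenericFlat

theorem poinIn_eq_sum_meeting_add_coeff (hF : IsGenericFlat K q A F)
    (hq : q + 1 = Module.finrank K V) :
    poinIn K Set.univ A μ =
      ∑ Y ∈ meetingFlatsIn Set.univ A F,
          Polynomial.C (μ Y) * (-Polynomial.X) ^ rkIn K Set.univ Y +
        Polynomial.C ((poinIn K Set.univ A μ).coeff (Module.finrank K V)) *
          Polynomial.X ^ Module.finrank K V := by
  set n := Module.finrank K V
  have hrk_meeting : ∀ Y ∈ meetingFlatsIn Set.univ A F, rkIn K Set.univ Y < n := fun Y hY => by
    have := (hF.inter_nonempty_iff (mem_meetingFlatsIn.1 hY).1).1 (mem_meetingFlatsIn.1 hY).2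
    omega
  have hrk_not_meeting : ∀ Y ∈ (interPosetIn Set.univ A).filter (fun Y => ¬(F ∩ Y).Nonempty),
      rkIn K Set.univ Y = n := fun Y hY => by
    obtain ⟨hYA, hYF⟩ := Finset.mem_filter.1 hY
    have := mt (hF.inter_nonempty_iff hYA).2 hYF
    have := rkIn_univ (K := K) Y
    omega
  obtain ⟨c, hc⟩ : ∃ c, poinIn K Set.univ A μ =
      ∑ Y ∈ meetingFlatsIn Set.univ A F,
          Polynomial.C (μ Y) * (-Polynomial.X) ^ rkIn K Set.univ Y +
        Polynomial.C c * Polynomial.X ^ n := by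
    refine ⟨(-1) ^ n *
      ∑ Y ∈ (interPosetIn Set.univ A).filter (fun Y => ¬(F ∩ Y).Nonempty), μ Y, ?_⟩
    rw [poinIn, ← Finset.sum_filter_add_sum_filter_not _ (fun Y => (F ∩ Y).Nonempty)]
    congr 1
    rw [Finset.sum_congr rfl fun Y hY => by rw [hrk_not_meeting Y hY], ← Finset.sum_mul,
      ← map_sum, Polynomial.C_mul_neg_X_pow]
  have hcoeff : (∑ Y ∈ meetingFlatsIn Set.univ A F,
      Polynomial.C (μ Y) * (-Polynomial.X) ^ rkIn K Set.univ Y).coeff n = 0 := by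
    rw [Polynomial.finsetSum_coeff]
    refine Finset.sum_eq_zero fun Y hY => ?_
    rw [Polynomial.C_mul_neg_X_pow, Polynomial.coeff_C_mul_X_pow, if_neg (hrk_meeting Y hY).ne']
  rw [hc, Polynomial.coeff_add, hcoeff, Polynomial.coeff_C_mul_X_pow, if_pos rfl, zero_add]

variable [FiniteDimensional K V]

theorem poinIn_insert_eq_sub_sum (hA : ∀ H ∈ A, IsHyperplane K H) (hF : IsGenericFlat K q A F)
    (hq : q < Module.finrank K V)
    (hμ : IsMobiusIn Set.univ A μ) (hμ' : IsMobiusIn Set.univ (insert F A) μ') :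
    poinIn K Set.univ (insert F A) μ' = poinIn K Set.univ A μ -
      ∑ Y ∈ meetingFlatsIn Set.univ A F,
        Polynomial.C (μ Y) * (-Polynomial.X) ^ (rkIn K Set.univ Y + (Module.finrank K V - q)) := by
  rw [poinIn, interPosetIn_insert, Finset.sum_union (hF.disjoint_image_inter hq),
    Finset.sum_image (hF.injOn_inter hA), poinIn, sub_eq_add_neg, ← Finset.sum_neg_distrib]
  congr 1
  · exact Finset.sum_congr rfl fun Y hY => by rw [hF.mobius_insert_eq hq hμ hμ' Y hY]
  · refine Finset.sum_congr rfl fun Y hY => ?_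
    have hYA := (mem_meetingFlatsIn.1 hY).1
    rw [hF.mobius_inter_eq_neg hA hq hμ hμ' Y hY,
      hF.rkIn_inter hq.le hYA (mem_meetingFlatsIn.1 hY).2, map_neg, neg_mul]

theorem poinIn_insert_hyperplane (hA : ∀ H ∈ A, IsHyperplane K H)
    (hF : IsGenericFlat K (Module.finrank K V - 1) A F)
    (hμ : IsMobiusIn Set.univ A μ) (hμ' : IsMobiusIn Set.univ (insert F A) μ') :
    poinIn K Set.univ (insert F A) μ' = (1 + Polynomial.X) * poinIn K Set.univ A μ -
      Polynomial.C ((poinIn K Set.univ A μ).coeff (Module.finrank K V)) *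
        Polynomial.X ^ (Module.finrank K V + 1) := by
  rcases Nat.eq_zero_or_pos (Module.finrank K V) with hn0 | hnpos
  · have := Module.finrank_zero_iff.1 hn0
    rw [poinIn_eq_one_of_subsingleton hμ', poinIn_eq_one_of_subsingleton hμ, hn0]
    simp
  · have hinsert := hF.poinIn_insert_eq_sub_sum hA (by omega) hμ hμ'
    have hsplit := hF.poinIn_eq_sum_meeting_add_coeff (μ := μ) (by omega)
    rw [show Module.finrank K V - (Module.finrank K V - 1) = 1 by omega] at hinsert
    have hshift : ∑ Y ∈ meetingFlatsIn Set.univ A F,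
        Polynomial.C (μ Y) * (-Polynomial.X) ^ (rkIn K Set.univ Y + 1) =
          -Polynomial.X * ∑ Y ∈ meetingFlatsIn Set.univ A F,
            Polynomial.C (μ Y) * (-Polynomial.X) ^ rkIn K Set.univ Y := by
      rw [Finset.mul_sum]
      exact Finset.sum_congr rfl fun Y _ => by ring
    linear_combination hinsert - hshift - Polynomial.X * hsplit

end IsGenericFlat

end PoincareOfGeneric

theorem poincare_of_added_generic_hyperplane_general {ℓ : ℕ} (A : Finset (Set (Fin ℓ → ℝ)))
    (hA : ∀ H ∈ A, IsHyperplane ℝ H)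
    (F : Set (Fin ℓ → ℝ)) (hF : IsGenericFlat ℝ (ℓ - 1) A F)
    (μ μ' : Set (Fin ℓ → ℝ) → ℤ)
    (hμ : IsMobiusIn Set.univ A μ)
    (hμ' : IsMobiusIn Set.univ (insert F A) μ') :
    poinIn ℝ Set.univ (insert F A) μ'
      = (1 + Polynomial.X) * poinIn ℝ Set.univ A μ
        - Polynomial.C ((poinIn ℝ Set.univ A μ).coeff ℓ) * Polynomial.X ^ (ℓ + 1) := by
  have hℓ : Module.finrank ℝ (Fin ℓ → ℝ) = ℓ := Module.finrank_fin_fun ℝ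
  simpa only [hℓ] using IsGenericFlat.poinIn_insert_hyperplane hA (by rwa [hℓ]) hμ hμ'

/-- For a finite arrangement `A` of affine hyperplanes in `ℝ^ℓ` and a
generic affine hyperplane `F^{ℓ-1}` (in particular `F^{ℓ-1} ∉ A`), the Poincaré
polynomial of the enlarged arrangement satisfies
`π(A ∪ {F^{ℓ-1}}, t) = (1+t)·π(A,t) − b_ℓ(A)·t^{ℓ+1}`. -/
theorem poincare_of_added_generic_hyperplane {ℓ : ℕ} (A : Finset (Set (Fin ℓ → ℝ)))
    (hA : ∀ H ∈ A, IsHyperplane ℝ H)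
    (F : Set (Fin ℓ → ℝ)) (hF : IsGenericFlat ℝ (ℓ - 1) A F) (hFA : F ∉ A)
    (μ μ' : Set (Fin ℓ → ℝ) → ℤ)
    (hμ : IsMobiusIn Set.univ A μ)
    (hμ' : IsMobiusIn Set.univ (insert F A) μ') :
    poinIn ℝ Set.univ (insert F A) μ'
      = (1 + Polynomial.X) * poinIn ℝ Set.univ A μ
        - Polynomial.C ((poinIn ℝ Set.univ A μ).coeff ℓ) * Polynomial.X ^ (ℓ + 1) :=
  poincare_of_added_generic_hyperplane_general A hA F hF μ μ' hμ hμ'
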